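/- arXiv:2412.10090 — 3 statements merged into one kernel-verified Lean document; each statement's English description precedes it below -/
import Mathlib

section
/- For every finite simple graph G, the codegree of the stable set polytope satisfies codeg(P_G) ≥ ω(G) + 1, where ω(G) is the clique number of G. -/
open Finset

noncomputable section

/-- The dilation `kP` of a set `P ⊆ ℝ^ι`. -/
def dilate {ι : Type*} (k : ℕ) (P : Set (ι → ℝ)) : Set (ι → ℝ) :=
  (fun x => (k : ℝ) • x) '' P

/-- A point of `ℝ^ι` is a lattice point if all its coordinates are integers. -/
def IsLatticePt {ι : Type*} (x : ι → ℝ) : Prop := ∀ i, ∃ m : ℤ, x i = m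

/-- The codegree of a (full-dimensional lattice) polytope `P ⊆ ℝ^ι`: the smallest
positive integer `k` such that the interior of `kP` contains a lattice point. -/
def codeg {ι : Type*} (P : Set (ι → ℝ)) : ℕ :=
  sInf {k | 0 < k ∧ ∃ x, IsLatticePt x ∧ x ∈ interior (dilate k P)}

/-- The stable set polytope of a simple graph: the convex hull of the indicator
vectors of the stable (independent) sets of `G`. -/
def stablePolytope {V : Type*} (G : SimpleGraph V) : Set (V → ℝ) :=
  convexHull ℝ {x | ∃ S : Set V, (∀ u ∈ S, ∀ v ∈ S, ¬ G.Adj u v) ∧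
    x = S.indicator (fun _ => (1 : ℝ))}

/-!
Let `x` be a lattice point in the interior of `k P_G`, i.e. `x = k z` with `z` interior to `P_G`.
The valid inequalities `z i ≥ 0` and `∑_{i ∈ Q} z i ≤ 1` (for a maximum clique `Q`) become strict
at interior points, so every coordinate of `x` is a positive integer, hence at least `1`, and
`ω(G) ≤ ∑_{i ∈ Q} x i < k`. The set defining the codegree is nonempty, because the all-ones
vector lies in the interior of `(n + 1) P_G`: the open corner simplex
`{z | 0 < z i, ∑ z i < 1}` lies inside `P_G`.
-/

theorem LinearMap.apply_lt_of_mem_interior {E : Type*} [AddCommGroup E] [Module ℝ E]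
    [TopologicalSpace E] [ContinuousAdd E] [ContinuousSMul ℝ E] (f : E →ₗ[ℝ] ℝ) {S : Set E}
    {c : ℝ} (hS : ∀ y ∈ S, f y ≤ c) {d : E} (hd : 0 < f d) {x : E} (hx : x ∈ interior S) :
    f x < c := by
  have hline : Filter.Tendsto (fun t : ℝ => x + t • d) (nhds 0) (nhds x) := by
    simpa using (by fun_prop : Continuous fun t : ℝ => x + t • d).tendsto' 0 x (by simp)
  have hnear : ∀ᶠ t in nhdsWithin (0 : ℝ) (Set.Ioi 0), x + t • d ∈ S :=
    (hline.eventually (mem_interior_iff_mem_nhds.mp hx)).filter_mono nhdsWithin_le_nhds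
  obtain ⟨t, htS, ht⟩ := (hnear.and self_mem_nhdsWithin).exists
  have hle := hS _ htS
  rw [map_add, map_smul, smul_eq_mul] at hle
  nlinarith [mul_pos (Set.mem_Ioi.mp ht) hd]

theorem IsLatticePt.one_le_of_pos {ι : Type*} {x : ι → ℝ} (hx : IsLatticePt x) {i : ι}
    (hi : 0 < x i) : 1 ≤ x i := by
  obtain ⟨m, hm⟩ := hx i
  rw [hm] at hi ⊢
  exact_mod_cast (Int.cast_pos.mp hi : 0 < m)

theorem interior_dilate {ι : Type*} {k : ℕ} (hk : k ≠ 0) (P : Set (ι → ℝ)) :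
    interior (dilate k P) = dilate k (interior P) := by
  simp only [dilate, Set.image_smul]
  exact interior_smul₀ (Nat.cast_ne_zero.mpr hk) P

theorem Convex.mem_of_nonneg_of_sum_le_one {ι : Type*} [Fintype ι] [DecidableEq ι]
    {s : Set (ι → ℝ)} (hs : Convex ℝ s) (h0 : (0 : ι → ℝ) ∈ s)
    (hsingle : ∀ i, Pi.single i 1 ∈ s) {x : ι → ℝ} (hx0 : ∀ i, 0 ≤ x i)
    (hx1 : ∑ i, x i ≤ 1) : x ∈ s := by
  have hcomb : x = ∑ o : Option ι,
      Option.elim o (1 - ∑ i, x i) x • Option.elim o 0 (fun i => Pi.single i 1) := by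
    rw [Fintype.sum_option]
    funext j
    simp [Pi.single_apply]
  rw [hcomb]
  refine hs.sum_mem ?_ ?_ ?_
  · rintro (_ | i) -
    exacts [sub_nonneg.mpr hx1, hx0 i]
  · simp [Fintype.sum_option]
  · rintro (_ | i) -
    exacts [h0, hsingle i]

namespace stablePolytope

variable {V : Type*} (G : SimpleGraph V)

theorem indicator_mem {S : Set V} (hS : ∀ u ∈ S, ∀ v ∈ S, ¬ G.Adj u v) :
    S.indicator (fun _ => (1 : ℝ)) ∈ stablePolytope G :=
  subset_convexHull ℝ _ ⟨S, hS, rfl⟩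

theorem zero_mem : (0 : V → ℝ) ∈ stablePolytope G := by
  convert indicator_mem G (S := ∅) (by simp)
  exact (Set.indicator_empty (M := ℝ) _).symm

theorem single_mem [DecidableEq V] (i : V) : Pi.single i (1 : ℝ) ∈ stablePolytope G := by
  have hsingle : Pi.single i (1 : ℝ) = ({i} : Set V).indicator (fun _ => 1) := by
    funext j
    simp [Pi.single_apply, Set.indicator_apply]
  rw [hsingle]
  exact indicator_mem G (by rintro u rfl v rfl; exact G.irrefl)

theorem apply_le_of_indicator_le (f : (V → ℝ) →ₗ[ℝ] ℝ) {c : ℝ}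
    (hf : ∀ S : Set V, (∀ u ∈ S, ∀ v ∈ S, ¬ G.Adj u v) → f (S.indicator (fun _ => 1)) ≤ c)
    {y : V → ℝ} (hy : y ∈ stablePolytope G) : f y ≤ c := by
  refine convexHull_min ?_ (convex_halfSpace_le f.isLinear c) hy
  rintro _ ⟨S, hS, rfl⟩
  exact hf S hS

theorem pos_of_mem_interior {z : V → ℝ} (hz : z ∈ interior (stablePolytope G)) (i : V) :
    0 < z i := by
  classical
  have hneg : -LinearMap.proj (R := ℝ) (φ := fun _ : V => ℝ) i z < 0 := by
    refine LinearMap.apply_lt_of_mem_interior (-LinearMap.proj i) (fun y hy => ?_)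
      (d := -Pi.single i 1) (by simp) hz
    refine apply_le_of_indicator_le G _ (fun S _ => ?_) hy
    simpa using Set.indicator_nonneg (fun _ _ => zero_le_one) i
  simpa using hneg

theorem sum_indicator_le_one {Q : Finset V} (hQ : G.IsClique (Q : Set V)) {S : Set V}
    (hS : ∀ u ∈ S, ∀ v ∈ S, ¬ G.Adj u v) :
    ∑ i ∈ Q, S.indicator (fun _ => (1 : ℝ)) i ≤ 1 := by
  classical
  simp only [Set.indicator_apply, Finset.sum_boole]
  have hcard : (Q.filter (· ∈ S)).card ≤ 1 := by
    refine Finset.card_le_one.mpr fun a ha b hb => ?_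
    rw [Finset.mem_filter] at ha hb
    by_contra hab
    exact hS a ha.2 b hb.2 (hQ ha.1 hb.1 hab)
  exact_mod_cast hcard

theorem sum_lt_one_of_mem_interior {z : V → ℝ} (hz : z ∈ interior (stablePolytope G))
    {Q : Finset V} (hQ : G.IsClique (Q : Set V)) : ∑ i ∈ Q, z i < 1 := by
  classical
  obtain rfl | ⟨i₀, hi₀⟩ := Q.eq_empty_or_nonempty
  · simp
  have hlt : (∑ i ∈ Q, LinearMap.proj (R := ℝ) (φ := fun _ : V => ℝ) i) z < 1 := by
    refine LinearMap.apply_lt_of_mem_interior _ (fun y hy => ?_) (d := Pi.single i₀ 1)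
      (by simp [Pi.single_apply, hi₀]) hz
    refine apply_le_of_indicator_le G _ (fun S hS => ?_) hy
    simpa using sum_indicator_le_one G hQ hS
  simpa using hlt

theorem mem_interior_of_pos [Fintype V] {z : V → ℝ} (hpos : ∀ i, 0 < z i)
    (hsum : ∑ i, z i < 1) : z ∈ interior (stablePolytope G) := by
  classical
  have hopen : IsOpen {z : V → ℝ | (∀ i, 0 < z i) ∧ ∑ i, z i < 1} := by
    simp only [Set.ofPred_and, Set.ofPred_forall]
    exact (isOpen_iInter_of_finite fun i => isOpen_lt continuous_const (continuous_apply i)).inter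
      (isOpen_lt (continuous_finsetSum _ fun i _ => continuous_apply i) continuous_const)
  refine interior_maximal (fun y hy => ?_) hopen ⟨hpos, hsum⟩
  exact (convex_convexHull ℝ _).mem_of_nonneg_of_sum_le_one (zero_mem G) (single_mem G)
    (fun i => (hy.1 i).le) hy.2.le

theorem one_mem_interior_dilate [Fintype V] :
    (fun _ => (1 : ℝ)) ∈ interior (dilate (Fintype.card V + 1) (stablePolytope G)) := by
  have hcard : (0 : ℝ) < Fintype.card V + 1 := by positivity
  rw [interior_dilate (Nat.succ_ne_zero _)]
  refine ⟨fun _ => (Fintype.card V + 1 : ℝ)⁻¹,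
    mem_interior_of_pos G (fun _ => by positivity) ?_, ?_⟩
  · rw [Finset.sum_const, Finset.card_univ, nsmul_eq_mul, ← div_eq_mul_inv, div_lt_one hcard]
    linarith
  · funext
    simp [hcard.ne']

end stablePolytope

/-- `codeg(P_G) ≥ ω(G) + 1`. -/
theorem stmt2 {n : ℕ} (G : SimpleGraph (Fin n)) :
    G.cliqueNum + 1 ≤ codeg (stablePolytope G) := by
  refine le_csInf ⟨n + 1, Nat.succ_pos n, fun _ => 1, fun _ => ⟨1, by simp⟩,
    by simpa using stablePolytope.one_mem_interior_dilate G⟩ ?_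
  rintro k ⟨hk, x, hx, hint⟩
  rw [interior_dilate hk.ne'] at hint
  obtain ⟨z, hz, rfl⟩ := hint
  have hk' : (0 : ℝ) < k := by exact_mod_cast hk
  have hone : ∀ i, (1 : ℝ) ≤ k * z i := fun i =>
    hx.one_le_of_pos (mul_pos hk' (stablePolytope.pos_of_mem_interior G hz i))
  obtain ⟨Q, hQ⟩ := G.exists_isNClique_cliqueNum
  have hω : (G.cliqueNum : ℝ) < k :=
    calc (G.cliqueNum : ℝ) = ∑ _i ∈ Q, (1 : ℝ) := by simp [hQ.card_eq]
      _ ≤ ∑ i ∈ Q, (k : ℝ) * z i := Finset.sum_le_sum fun i _ => hone i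
      _ = k * ∑ i ∈ Q, z i := (Finset.mul_sum _ _ _).symm
      _ < k * 1 := mul_lt_mul_of_pos_left
          (stablePolytope.sum_lt_one_of_mem_interior G hz hQ.isClique) hk'
      _ = k := mul_one _
  exact_mod_cast hω
end
end

section
/- For every complete multipartite graph G with k nonempty parts on vertex set [n], codeg(P_G) = k + 1. -/
open Finset

noncomputable section

/-! A transversal `T` of the parts is a clique, and a stable set meets a clique at most once, so
`P_G ⊆ {x ≥ 0, ∑_{v ∈ T} x v ≤ 1}`. A lattice point interior to `m • P_G` then has all coordinates
`≥ 1` and `∑_{v ∈ T} x v < m`, which forces `k < m`. Conversely, near `𝟙 / (k + 1)` every `x` is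
`a` times the sum of the part indicators plus a small nonnegative combination of unit vectors, a
subconvex combination of stable sets; hence `𝟙` is interior to `(k + 1) • P_G`. -/

open Topology

theorem Convex.sum_mem_of_zero_mem {R E ι : Type*} [Field R] [LinearOrder R]
    [IsStrictOrderedRing R] [AddCommGroup E] [Module R E] {s : Set E} (hs : Convex R s)
    (h0 : (0 : E) ∈ s) {t : Finset ι} {w : ι → R} {z : ι → E} (hw₀ : ∀ i ∈ t, 0 ≤ w i)
    (hw₁ : ∑ i ∈ t, w i ≤ 1) (hz : ∀ i ∈ t, z i ∈ s) : ∑ i ∈ t, w i • z i ∈ s := by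
  classical
  have h := hs.sum_mem (t := Finset.insertNone t) (w := fun o => o.elim (1 - ∑ i ∈ t, w i) w)
    (z := fun o => o.elim 0 z) (by simpa [Option.forall, sub_nonneg] using ⟨hw₁, hw₀⟩) (by simp)
    (by simpa [Option.forall] using ⟨h0, hz⟩)
  simpa using h

theorem LinearMap.lt_of_mem_interior {E : Type*} [AddCommGroup E] [Module ℝ E]
    [TopologicalSpace E] [ContinuousAdd E] [ContinuousSMul ℝ E] (ℓ : E →ₗ[ℝ] ℝ) {s : Set E}
    {c : ℝ} (hs : ∀ y ∈ s, ℓ y ≤ c) {w : E} (hw : 0 < ℓ w) {x : E} (hx : x ∈ interior s) :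
    ℓ x < c := by
  have hline : ∀ᶠ t in 𝓝[>] (0 : ℝ), x + t • w ∈ s :=
    nhdsWithin_le_nhds <| (Continuous.tendsto' (by fun_prop) 0 x (by simp))
      (mem_interior_iff_mem_nhds.1 hx)
  obtain ⟨t, hts, ht⟩ := (hline.and self_mem_nhdsWithin).exists
  have := hs _ hts
  rw [map_add, map_smul, smul_eq_mul] at this
  nlinarith [mul_pos (Set.mem_Ioi.1 ht) hw]

theorem le_of_mem_dilate {ι : Type*} {P : Set (ι → ℝ)} (ℓ : (ι → ℝ) →ₗ[ℝ] ℝ) {c : ℝ}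
    (hP : ∀ p ∈ P, ℓ p ≤ c) (m : ℕ) : ∀ y ∈ dilate m P, ℓ y ≤ m * c := by
  rintro _ ⟨p, hp, rfl⟩
  rw [map_smul, smul_eq_mul]
  exact mul_le_mul_of_nonneg_left (hP p hp) (Nat.cast_nonneg m)

namespace SimpleGraph

variable {V : Type*} {G : SimpleGraph V}

theorem indicator_mem_stablePolytope {S : Set V} (hS : ∀ u ∈ S, ∀ v ∈ S, ¬ G.Adj u v) :
    S.indicator (fun _ => (1 : ℝ)) ∈ stablePolytope G :=
  subset_convexHull ℝ _ ⟨S, hS, rfl⟩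

theorem zero_mem_stablePolytope : (0 : V → ℝ) ∈ stablePolytope G := by
  have h := indicator_mem_stablePolytope (G := G) (S := ∅) (by simp)
  rwa [Set.indicator_empty] at h

theorem le_of_mem_stablePolytope {ℓ : (V → ℝ) →ₗ[ℝ] ℝ} {c : ℝ}
    (h : ∀ S : Set V, (∀ u ∈ S, ∀ v ∈ S, ¬ G.Adj u v) → ℓ (S.indicator fun _ => 1) ≤ c) :
    ∀ p ∈ stablePolytope G, ℓ p ≤ c := fun _ hp =>
  convexHull_min (by rintro _ ⟨S, hS, rfl⟩; exact h S hS) (convex_halfSpace_le ℓ.isLinear c) hp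

theorem IsClique.sum_le_one_of_mem_stablePolytope {C : Finset V} (hC : G.IsClique (C : Set V))
    {p : V → ℝ} (hp : p ∈ stablePolytope G) : ∑ v ∈ C, p v ≤ 1 := by
  classical
  have h := le_of_mem_stablePolytope (ℓ := ∑ v ∈ C, LinearMap.proj v) (c := 1)
    (fun S hS => ?_) p hp
  · simpa using h
  simp only [LinearMap.coe_sum, Finset.sum_apply, LinearMap.coe_proj, Function.eval,
    Set.indicator_apply, Finset.sum_boole]
  exact_mod_cast Finset.card_le_one.2 fun a ha b hb => by
    simp only [Finset.mem_filter] at ha hb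
    by_contra hab
    exact hS a ha.2 b hb.2 (hC ha.1 hb.1 hab)

theorem IsNClique.lt_of_mem_interior_dilate {C : Finset V} {r : ℕ} (hC : G.IsNClique r C)
    {m : ℕ} (hm : 0 < m) {x : V → ℝ} (hx : IsLatticePt x)
    (hxint : x ∈ interior (dilate m (stablePolytope G))) : r < m := by
  obtain rfl | hne := C.eq_empty_or_nonempty
  · simpa [← hC.card_eq] using hm
  have hone_le : ∀ v, 1 ≤ x v := fun v => by
    have hnonneg : ∀ p ∈ stablePolytope G, (-LinearMap.proj v : (V → ℝ) →ₗ[ℝ] ℝ) p ≤ 0 :=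
      le_of_mem_stablePolytope fun S _ => by
        simpa using Set.indicator_nonneg (fun _ _ => zero_le_one) v
    have hpos := (-LinearMap.proj v).lt_of_mem_interior (le_of_mem_dilate _ hnonneg m)
      (w := -1) (by simp) hxint
    obtain ⟨z, hz⟩ := hx v
    simp only [hz, LinearMap.neg_apply, LinearMap.coe_proj, Function.eval, mul_zero,
      Left.neg_neg_iff, Int.cast_pos] at hpos ⊢
    exact_mod_cast hpos
  have hsum_lt : ∑ v ∈ C, x v < m := by
    have hclique : ∀ p ∈ stablePolytope G, (∑ v ∈ C, LinearMap.proj v : (V → ℝ) →ₗ[ℝ] ℝ) p ≤ 1 :=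
      fun p hp => by simpa using hC.isClique.sum_le_one_of_mem_stablePolytope hp
    simpa using (∑ v ∈ C, LinearMap.proj v).lt_of_mem_interior (le_of_mem_dilate _ hclique m)
      (w := 1) (by simpa using hne) hxint
  have hcard_le : (r : ℝ) ≤ ∑ v ∈ C, x v := by
    simpa [hC.card_eq] using C.card_nsmul_le_sum x 1 fun v _ => hone_le v
  exact_mod_cast hcard_le.trans_lt hsum_lt

variable [Fintype V] {ι : Type*} [Fintype ι] {f : V → ι}

theorem mem_stablePolytope_of_forall_le (hG : ∀ u v, G.Adj u v ↔ f u ≠ f v) {a : ℝ}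
    (ha : 0 ≤ a) {x : V → ℝ} (hax : ∀ v, a ≤ x v)
    (hsum : Fintype.card ι * a + ∑ v, (x v - a) ≤ 1) : x ∈ stablePolytope G := by
  have hpart : ∀ j, (f ⁻¹' {j}).indicator (fun _ => (1 : ℝ)) ∈ stablePolytope G := fun j =>
    indicator_mem_stablePolytope fun u hu v hv => by simp_all
  have hsingle : ∀ u, ({u} : Set V).indicator (fun _ => (1 : ℝ)) ∈ stablePolytope G :=
    fun u => indicator_mem_stablePolytope fun _ hv _ hw => by simp_all
  have hx : x = ∑ o : ι ⊕ V, Sum.elim (fun _ => a) (fun v => x v - a) o •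
      Sum.elim (fun j => (f ⁻¹' {j}).indicator fun _ => (1 : ℝ))
        (fun u => ({u} : Set V).indicator fun _ => (1 : ℝ)) o := by
    classical
    ext v
    simp [Fintype.sum_sum_type, Finset.sum_apply, Set.indicator_apply, Pi.single_apply]
  rw [hx]
  refine (convex_convexHull ℝ _).sum_mem_of_zero_mem zero_mem_stablePolytope ?_ ?_ ?_
  · rintro (j | v) -
    exacts [ha, sub_nonneg.2 (hax v)]
  · simpa [Fintype.sum_sum_type] using hsum
  · rintro (j | v) -
    exacts [hpart j, hsingle v]

theorem inv_smul_one_mem_interior_stablePolytope (hG : ∀ u v, G.Adj u v ↔ f u ≠ f v) :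
    ((Fintype.card ι : ℝ) + 1)⁻¹ • (1 : V → ℝ) ∈ interior (stablePolytope G) := by
  set c : ℝ := ((Fintype.card ι : ℝ) + 1)⁻¹
  set N : ℝ := (Fintype.card V : ℝ)
  -- `c - a = c / (N + 1)`, so at `c • 1` the constraint sum is `(card ι + 1) * a = N / (N + 1) < 1`
  set a : ℝ := N / (N + 1) * c
  have hc : 0 < c := by positivity
  have ha : 0 ≤ a := by positivity
  have hac : a < c := mul_lt_of_lt_one_left hc ((div_lt_one (by positivity)).2 (lt_add_one N))
  rw [mem_interior]
  refine ⟨{x | (∀ v, a < x v) ∧ Fintype.card ι * a + ∑ v, (x v - a) < 1}, ?_, ?_, ?_⟩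
  · exact fun x hx => mem_stablePolytope_of_forall_le hG ha (fun v => (hx.1 v).le) hx.2.le
  · rw [Set.ofPred_and, Set.ofPred_forall]
    exact (isOpen_iInter_of_finite fun v => isOpen_lt continuous_const (continuous_apply v)).inter
      (isOpen_lt (by fun_prop) continuous_const)
  · refine ⟨fun v => by simpa using hac, ?_⟩
    have hN : (Fintype.card ι : ℝ) * a + N * (c - a) = N / (N + 1) := by
      have : (N + 1) ≠ 0 := by positivity
      have : (Fintype.card ι : ℝ) + 1 ≠ 0 := by positivity
      simp only [a, c]
      field_simp
      ring
    simp only [Pi.smul_apply, Pi.one_apply, smul_eq_mul, mul_one, Finset.sum_const,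
      Finset.card_univ, nsmul_eq_mul]
    rw [hN]
    exact (div_lt_one (by positivity)).2 (lt_add_one N)

theorem one_mem_interior_dilate_stablePolytope (hG : ∀ u v, G.Adj u v ↔ f u ≠ f v) :
    (1 : V → ℝ) ∈ interior (dilate (Fintype.card ι + 1) (stablePolytope G)) := by
  rw [dilate, Set.image_smul, interior_smul₀ (by positivity), Set.mem_smul_set_iff_inv_smul_mem₀
    (by positivity)]
  exact_mod_cast inv_smul_one_mem_interior_stablePolytope hG

end SimpleGraph

/-- For a complete multipartite graph `G` with `k` nonempty parts (the fibers of a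
surjection `f` onto `Fin k`), `codeg(P_G) = k + 1`. -/
theorem stmt14 {n k : ℕ} (G : SimpleGraph (Fin n)) (f : Fin n → Fin k)
    (hsurj : Function.Surjective f)
    (hG : ∀ u v, G.Adj u v ↔ f u ≠ f v) :
    codeg (stablePolytope G) = k + 1 := by
  have hone : IsLatticePt (1 : Fin n → ℝ) := fun _ => ⟨1, by simp⟩
  have hinterior : (1 : Fin n → ℝ) ∈ interior (dilate (k + 1) (stablePolytope G)) := by
    simpa using SimpleGraph.one_mem_interior_dilate_stablePolytope hG
  have htransversal : G.IsNClique k (Finset.univ.image (Function.surjInv hsurj)) := by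
    refine ⟨?_, by simp [Finset.card_image_of_injective _ (Function.injective_surjInv hsurj)]⟩
    simp only [Finset.coe_image, Finset.coe_univ, Set.image_univ]
    rintro _ ⟨i, rfl⟩ _ ⟨j, rfl⟩ hij
    simpa [hG, Function.surjInv_eq hsurj] using fun h => hij (congrArg _ h)
  exact le_antisymm (Nat.sInf_le ⟨k.succ_pos, 1, hone, hinterior⟩) <|
    le_csInf ⟨_, k.succ_pos, 1, hone, hinterior⟩ fun m ⟨hm, _, hx, hxint⟩ =>
      htransversal.lt_of_mem_interior_dilate hm hx hxint
end
end

section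
/- Let n ≥ 5 be odd and G = L(K_n) the line graph of the complete graph K_n. Then ω(G) + 1 = n < codeg(P_G) = χ(G) + 1 = n + 1. -/
open Finset

noncomputable section

/-!
Two edges of `K_n` are adjacent in `L(K_n)` iff they share an endpoint, so a clique of `L(K_n)`
either has a common vertex or lies in a triangle: `ω = n - 1`. Stable sets of `L(K_n)` are
matchings, of size at most `(n - 1) / 2` for odd `n`; as `K_n` has `n (n - 1) / 2` edges, every
colouring uses at least `n` colours, and `s(i, j) ↦ i + j (mod n)` uses exactly `n`.

The same count gives `∑ x ≤ (n - 1) / 2` on `P = P_{L(K_n)}`. A lattice point in the interior of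
`kP` has all coordinates `≥ 1` and `∑ x < k (n - 1) / 2`, which forces `k > n`. Conversely the `n`
colour classes average to `(1/n) 𝟙 ∈ P`, and `P` contains the simplex spanned by `0` and the unit
vectors, so the segment from a small multiple of `𝟙` to `(1/n) 𝟙` puts `(1/(n+1)) 𝟙` in the
interior of `P`, i.e. `𝟙` in the interior of `(n + 1) P`.
-/

open SimpleGraph Filter Topology Pointwise

theorem Sym2.eq_of_meets_triangle {V : Type*} {a b c : V} {h : Sym2 V} (hh : ¬h.IsDiag)
    (hab : a ≠ b) (hbc : b ≠ c) (hac : a ≠ c)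
    (h₁ : a ∈ h ∨ b ∈ h) (h₂ : b ∈ h ∨ c ∈ h) (h₃ : a ∈ h ∨ c ∈ h) :
    h = s(a, b) ∨ h = s(b, c) ∨ h = s(a, c) := by
  induction h with
  | h x y =>
    simp only [Sym2.mk_isDiag_iff, Sym2.mem_iff, Sym2.eq_iff] at *
    grind

namespace SimpleGraph

variable {V : Type*} {G : SimpleGraph V}

theorem mem_or_mem_of_isClique_lineGraph {s : Finset G.edgeSet}
    (hs : G.lineGraph.IsClique (s : Set G.edgeSet)) {e f : G.edgeSet} (he : e ∈ s)
    (hf : f ∈ s) {a b : V} (hfab : (f : Sym2 V) = s(a, b)) :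
    a ∈ (e : Sym2 V) ∨ b ∈ (e : Sym2 V) := by
  obtain rfl | hef := eq_or_ne e f
  · simp [hfab]
  obtain ⟨-, v, hve, hvf⟩ := lineGraph_adj_iff_exists.1 (hs he hf hef)
  rw [hfab, Sym2.mem_iff] at hvf
  rcases hvf with rfl | rfl <;> simp [hve]

theorem card_le_three_of_isClique_lineGraph {s : Finset G.edgeSet}
    (hs : G.lineGraph.IsClique (s : Set G.edgeSet))
    (hstar : ∀ a, ∃ e ∈ s, a ∉ (e : Sym2 V)) : #s ≤ 3 := by
  classical
  rcases s.eq_empty_or_nonempty with rfl | ⟨e, he⟩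
  · simp
  obtain ⟨⟨a, b⟩, hab⟩ := Quot.exists_rep (e : Sym2 V)
  replace hab : (e : Sym2 V) = s(a, b) := hab.symm
  obtain ⟨f, hf, haf⟩ := hstar a
  obtain ⟨g, hg, hbg⟩ := hstar b
  have hbf : b ∈ (f : Sym2 V) :=
    (mem_or_mem_of_isClique_lineGraph hs hf he hab).resolve_left haf
  have hag : a ∈ (g : Sym2 V) :=
    (mem_or_mem_of_isClique_lineGraph hs hg he hab).resolve_right hbg
  obtain ⟨c, hbc⟩ := Sym2.mem_iff_exists.1 hbf
  have hcg : c ∈ (g : Sym2 V) :=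
    (mem_or_mem_of_isClique_lineGraph hs hg hf hbc).resolve_left hbg
  have hab' : a ≠ b := (G.mem_edgeSet.1 (hab ▸ e.2)).ne
  have hbc' : b ≠ c := (G.mem_edgeSet.1 (hbc ▸ f.2)).ne
  have hac' : a ≠ c := by rintro rfl; simp [hbc] at haf
  have hac : (g : Sym2 V) = s(a, c) := (Sym2.mem_and_mem_iff hac').1 ⟨hag, hcg⟩
  have hsub : s ⊆ {e, f, g} := by
    intro h hh
    have := Sym2.eq_of_meets_triangle (G.not_isDiag_of_mem_edgeSet h.2) hab' hbc' hac'
      (mem_or_mem_of_isClique_lineGraph hs hh he hab)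
      (mem_or_mem_of_isClique_lineGraph hs hh hf hbc)
      (mem_or_mem_of_isClique_lineGraph hs hh hg hac)
    rcases this with h₁ | h₁ | h₁ <;> simp [Subtype.ext_iff, h₁, hab, hbc, hac]
  exact (Finset.card_le_card hsub).trans Finset.card_le_three

theorem card_le_of_isClique_lineGraph [Fintype V] [DecidableEq V] [DecidableRel G.Adj]
    {s : Finset G.edgeSet} (hs : G.lineGraph.IsClique (s : Set G.edgeSet)) :
    #s ≤ max (Fintype.card V - 1) 3 := by
  by_cases hstar : ∃ a, ∀ e ∈ s, a ∈ (e : Sym2 V)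
  · obtain ⟨a, ha⟩ := hstar
    have hsub : s.map (Function.Embedding.subtype _) ⊆ G.incidenceFinset a := by
      intro x hx
      obtain ⟨e, he, rfl⟩ := Finset.mem_map.1 hx
      exact (G.mem_incidenceFinset _ _).2 ⟨e.2, ha e he⟩
    calc #s = #(s.map (Function.Embedding.subtype _)) := (Finset.card_map _).symm
      _ ≤ G.degree a := (Finset.card_le_card hsub).trans (G.card_incidenceFinset_eq_degree a).le
      _ ≤ Fintype.card V - 1 := Nat.le_sub_one_of_lt (G.degree_lt_card_verts a)
      _ ≤ _ := le_max_left _ _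
  · push Not at hstar
    exact (card_le_three_of_isClique_lineGraph hs hstar).trans (le_max_right _ _)

theorem degree_le_cliqueNum_lineGraph [Fintype V] [DecidableEq V] [DecidableRel G.Adj]
    (a : V) : G.degree a ≤ G.lineGraph.cliqueNum := by
  set t : Finset G.edgeSet := (G.incidenceFinset a).subtype (· ∈ G.edgeSet)
  have hmem : ∀ e ∈ t, a ∈ (e : Sym2 V) := fun e he ↦
    ((G.mem_incidenceFinset _ _).1 (Finset.mem_subtype.1 he)).2
  have ht : G.lineGraph.IsClique (t : Set G.edgeSet) := fun e he f hf hef ↦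
    lineGraph_adj_iff_exists.2 ⟨hef, a, hmem e he, hmem f hf⟩
  calc G.degree a = #t := by
        rw [Finset.card_subtype, Finset.filter_true_of_mem fun e he ↦
          ((G.mem_incidenceFinset _ _).1 he).1, card_incidenceFinset_eq_degree]
    _ ≤ _ := ht.card_le_cliqueNum

theorem cliqueNum_lineGraph_le [Fintype V] [DecidableEq V] [DecidableRel G.Adj] :
    G.lineGraph.cliqueNum ≤ max (Fintype.card V - 1) 3 := by
  obtain ⟨s, hs⟩ := G.lineGraph.exists_isNClique_cliqueNum
  rw [← hs.card_eq]
  exact card_le_of_isClique_lineGraph hs.isClique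

theorem cliqueNum_lineGraph_top [Fintype V] [DecidableEq V] (hV : 4 ≤ Fintype.card V) :
    (⊤ : SimpleGraph V).lineGraph.cliqueNum = Fintype.card V - 1 := by
  obtain ⟨a⟩ : Nonempty V := Fintype.card_pos_iff.1 (by omega)
  refine le_antisymm (cliqueNum_lineGraph_le.trans (by omega)) ?_
  simpa using degree_le_cliqueNum_lineGraph (G := ⊤) a

theorem two_mul_card_le_of_isIndepSet_lineGraph [Fintype V] [DecidableEq V]
    {s : Finset G.edgeSet} (hs : G.lineGraph.IsIndepSet (s : Set G.edgeSet)) :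
    2 * #s ≤ Fintype.card V := by
  have hdisj : (s : Set G.edgeSet).PairwiseDisjoint fun e ↦ (e : Sym2 V).toFinset := by
    intro e he f hf hef
    rw [Function.onFun, Finset.disjoint_left]
    intro v hve hvf
    exact hs he hf hef <| lineGraph_adj_iff_exists.2
      ⟨hef, v, Sym2.mem_toFinset.1 hve, Sym2.mem_toFinset.1 hvf⟩
  calc 2 * #s = ∑ e ∈ s, #(e : Sym2 V).toFinset := by
        rw [Finset.sum_congr rfl fun e _ ↦
          Sym2.card_toFinset_of_not_isDiag _ (G.not_isDiag_of_mem_edgeSet e.2)]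
        simp [mul_comm]
    _ = #(s.biUnion fun e ↦ (e : Sym2 V).toFinset) := (Finset.card_biUnion hdisj).symm
    _ ≤ Fintype.card V := Finset.card_le_univ _

theorem two_mul_indepNum_lineGraph_le [Fintype V] :
    2 * G.lineGraph.indepNum ≤ Fintype.card V := by
  classical
  obtain ⟨s, hs⟩ := G.lineGraph.exists_isNIndepSet_indepNum
  rw [← hs.card_eq]
  exact two_mul_card_le_of_isIndepSet_lineGraph hs.isIndepSet

theorem Colorable.card_le_mul_indepNum [Fintype V] {m : ℕ} (h : G.Colorable m) :
    Fintype.card V ≤ m * G.indepNum := by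
  classical
  obtain ⟨C⟩ := h
  have hclass (c : Fin m) : #{v | C v = c} ≤ G.indepNum :=
    IsIndepSet.card_le_indepNum fun v hv w hw ↦ C.isIndepSet_colorClass c
      (show C v = c by simpa using hv) (show C w = c by simpa using hw)
  simpa [mul_comm] using Finset.card_le_mul_card_image_of_maps_to (f := C) (s := Finset.univ)
    (t := Finset.univ) (fun _ _ ↦ Finset.mem_univ _) G.indepNum fun c _ ↦ hclass c

theorem card_edgeSet_top_of_odd [Fintype V] [DecidableEq V] (hV : Odd (Fintype.card V)) :
    Fintype.card (⊤ : SimpleGraph V).edgeSet = Fintype.card V * (Fintype.card V / 2) := by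
  rw [← edgeFinset_card, card_edgeFinset_top_eq_card_choose_two, Nat.choose_two_right]
  obtain ⟨j, hj⟩ := hV
  rw [hj, show 2 * j + 1 - 1 = 2 * j by omega, show (2 * j + 1) / 2 = j by omega, mul_left_comm,
    Nat.mul_div_cancel_left _ two_pos]

def sumColoringLineGraphTop (α : Type*) [AddCancelCommMonoid α] :
    (⊤ : SimpleGraph α).lineGraph.Coloring α :=
  Coloring.mk (fun e ↦ Sym2.lift ⟨(· + ·), add_comm⟩ (e : Sym2 α)) fun {e f} hef ↦ by
    obtain ⟨hne, v, hve, hvf⟩ := lineGraph_adj_iff_exists.1 hef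
    obtain ⟨x, hx⟩ := Sym2.mem_iff_exists.1 hve
    obtain ⟨y, hy⟩ := Sym2.mem_iff_exists.1 hvf
    intro hsum
    simp only [hx, hy, Sym2.lift_mk] at hsum
    exact hne (Subtype.ext (by rw [hx, hy, add_left_cancel hsum]))

variable {n : ℕ}

theorem card_edgeSet_top_fin (hodd : Odd n) :
    Fintype.card (⊤ : SimpleGraph (Fin n)).edgeSet = n * (n / 2) := by
  simpa using card_edgeSet_top_of_odd (V := Fin n) (by simpa using hodd)

theorem indepNum_lineGraph_top_fin_le :
    (⊤ : SimpleGraph (Fin n)).lineGraph.indepNum ≤ n / 2 := by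
  have := two_mul_indepNum_lineGraph_le (G := (⊤ : SimpleGraph (Fin n)))
  simp only [Fintype.card_fin] at this
  omega

theorem chromaticNumber_lineGraph_top_fin (hn : 1 < n) (hodd : Odd n) :
    (⊤ : SimpleGraph (Fin n)).lineGraph.chromaticNumber = n := by
  have : NeZero n := ⟨by omega⟩
  refine le_antisymm ?_ (le_chromaticNumber_iff_colorable.2 fun m hm ↦ ?_)
  · simpa using (sumColoringLineGraphTop (Fin n)).colorable.chromaticNumber_le
  · have hmα := hm.card_le_mul_indepNum
    rw [card_edgeSet_top_fin hodd] at hmα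
    exact_mod_cast Nat.le_of_mul_le_mul_right
      (hmα.trans (Nat.mul_le_mul_left m indepNum_lineGraph_top_fin_le)) (by omega)

end SimpleGraph

theorem exists_pos_add_smul_mem_of_mem_interior {E : Type*} [AddCommGroup E] [Module ℝ E]
    [TopologicalSpace E] [IsTopologicalAddGroup E] [ContinuousSMul ℝ E] {s : Set E} {x : E}
    (hx : x ∈ interior s) (d : E) : ∃ t > (0 : ℝ), x + t • d ∈ s := by
  have hlim : Tendsto (fun t : ℝ ↦ x + t • d) (𝓝[>] 0) (𝓝 x) := by
    have hcont : Continuous fun t : ℝ ↦ x + t • d := by fun_prop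
    simpa using (hcont.tendsto 0).mono_left nhdsWithin_le_nhds
  obtain ⟨t, hts, ht⟩ := ((hlim.eventually (mem_interior_iff_mem_nhds.1 hx)).and
    self_mem_nhdsWithin).exists
  exact ⟨t, ht, hts⟩

theorem Convex.smul_mem_interior_of_lt {E : Type*} [AddCommGroup E] [Module ℝ E]
    [TopologicalSpace E] [IsTopologicalAddGroup E] [ContinuousSMul ℝ E] {s : Set E}
    (hs : Convex ℝ s) {u : E} {a b c : ℝ} (ha : a • u ∈ interior s) (hc : c • u ∈ s)
    (hab : a < b) (hbc : b < c) : b • u ∈ interior s := by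
  refine hs.openSegment_interior_self_subset_interior ha hc ?_
  rw [← LinearMap.toSpanSingleton_apply, ← LinearMap.toSpanSingleton_apply ℝ E u c,
    ← LinearMap.coe_toAffineMap, ← image_openSegment, openSegment_eq_Ioo (hab.trans hbc)]
  exact ⟨b, ⟨hab, hbc⟩, rfl⟩

theorem dilate_eq_smul {ι : Type*} (k : ℕ) (P : Set (ι → ℝ)) :
    dilate k P = (k : ℝ) • P :=
  Set.image_smul

variable {V : Type*} {G : SimpleGraph V}

theorem convex_stablePolytope : Convex ℝ (stablePolytope G) := convex_convexHull ℝ _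

theorem indicator_mem_stablePolytope {S : Set V} (hS : G.IsIndepSet S) :
    S.indicator (fun _ ↦ 1) ∈ stablePolytope G := by
  refine subset_convexHull ℝ _ ⟨S, fun u hu v hv ↦ ?_, rfl⟩
  obtain rfl | huv := eq_or_ne u v
  · exact G.irrefl
  · exact hS hu hv huv

theorem inv_card_smul_one_mem_stablePolytope {α : Type*} [Fintype α] [Nonempty α]
    (C : G.Coloring α) :
    (Fintype.card α : ℝ)⁻¹ • (1 : V → ℝ) ∈ stablePolytope G := by
  classical
  have hsum : (Fintype.card α : ℝ)⁻¹ • (1 : V → ℝ) =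
      ∑ c, (Fintype.card α : ℝ)⁻¹ • (C.colorClass c).indicator fun _ ↦ 1 := by
    ext v
    simp [Finset.sum_apply, Set.indicator_apply, Coloring.colorClass]
  rw [hsum]
  exact convex_stablePolytope.sum_mem (fun _ _ ↦ by positivity) (by simp)
    fun c _ ↦ indicator_mem_stablePolytope (C.isIndepSet_colorClass c)

variable [Fintype V]

theorem stablePolytope_subset :
    stablePolytope G ⊆ {x | 0 ≤ x ∧ ∑ v, x v ≤ G.indepNum} := by
  classical
  have hconv : Convex ℝ (Set.Ici 0 ∩ {x : V → ℝ | ∑ v, x v ≤ G.indepNum}) :=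
    (convex_Ici 0).inter <| convex_halfSpace_le
      ⟨fun x y ↦ Finset.sum_add_distrib, fun c x ↦ (Finset.mul_sum _ _ _).symm⟩ _
  refine convexHull_min ?_ hconv
  rintro _ ⟨S, hS, rfl⟩
  refine ⟨Set.indicator_nonneg fun _ _ ↦ zero_le_one, ?_⟩
  have hindep : G.IsIndepSet ((Finset.univ.filter (· ∈ S) : Finset V) : Set V) :=
    fun u hu v hv _ ↦ hS u (by simpa using hu) v (by simpa using hv)
  simpa [Set.indicator_apply] using hindep.card_le_indepNum

theorem card_lt_of_isLatticePt_mem_interior [Nonempty V] {S : Set (V → ℝ)} {b : ℝ}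
    (hS : S ⊆ {x | 0 ≤ x ∧ ∑ v, x v ≤ b}) {x : V → ℝ} (hx : IsLatticePt x)
    (hxS : x ∈ interior S) : (Fintype.card V : ℝ) < b := by
  classical
  have hone : ∀ v, 1 ≤ x v := by
    intro v
    obtain ⟨t, ht, hmem⟩ := exists_pos_add_smul_mem_of_mem_interior hxS (-Pi.single v 1)
    have hpos : 0 < x v := ht.trans_le (by simpa using (hS hmem).1 v)
    obtain ⟨m, hm⟩ := hx v
    rw [hm] at hpos ⊢
    exact_mod_cast (Int.cast_pos.1 hpos : 0 < m)
  obtain ⟨t, ht, hmem⟩ := exists_pos_add_smul_mem_of_mem_interior hxS 1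
  calc (Fintype.card V : ℝ) = ∑ _v : V, (1 : ℝ) := by simp
    _ ≤ ∑ v, x v := Finset.sum_le_sum fun v _ ↦ hone v
    _ < ∑ v, x v + t * Fintype.card V :=
      lt_add_of_pos_right _ (mul_pos ht (by exact_mod_cast Fintype.card_pos))
    _ = ∑ v, (x + t • 1) v := by simp [Finset.sum_add_distrib, mul_comm]
    _ ≤ b := (hS hmem).2

theorem card_lt_mul_indepNum_of_isLatticePt_mem_interior_dilate [Nonempty V] {k : ℕ}
    {x : V → ℝ} (hx : IsLatticePt x) (hxk : x ∈ interior (dilate k (stablePolytope G))) :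
    Fintype.card V < k * G.indepNum := by
  have hsub : dilate k (stablePolytope G) ⊆
      {x | 0 ≤ x ∧ ∑ v, x v ≤ ((k * G.indepNum : ℕ) : ℝ)} := by
    rintro _ ⟨y, hy, rfl⟩
    obtain ⟨hy₀, hysum⟩ := stablePolytope_subset hy
    refine ⟨smul_nonneg k.cast_nonneg hy₀, ?_⟩
    simpa [← Finset.mul_sum] using mul_le_mul_of_nonneg_left hysum k.cast_nonneg
  exact_mod_cast card_lt_of_isLatticePt_mem_interior hsub hx hxk

theorem mem_stablePolytope_of_nonneg_of_sum_le_one {x : V → ℝ} (hx₀ : 0 ≤ x)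
    (hx : ∑ v, x v ≤ 1) : x ∈ stablePolytope G := by
  classical
  have hsum : x = ∑ o : Option V, o.elim (1 - ∑ v, x v) x •
      (o.elim ∅ ({·}) : Set V).indicator fun _ ↦ 1 := by
    ext u
    simp [Fintype.sum_option, Finset.sum_apply, Set.indicator_apply]
  rw [hsum]
  refine convex_stablePolytope.sum_mem ?_ (by simp [Fintype.sum_option]) ?_
  · rintro (_ | v) _
    exacts [sub_nonneg.2 hx, hx₀ v]
  · rintro (_ | v) _
    exacts [indicator_mem_stablePolytope (Set.pairwise_empty _),
      indicator_mem_stablePolytope (Set.pairwise_singleton _ _)]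

theorem smul_one_mem_interior_stablePolytope {δ : ℝ} (hδ : 0 < δ)
    (hδV : δ * Fintype.card V < 1) : δ • (1 : V → ℝ) ∈ interior (stablePolytope G) := by
  set U := {x : V → ℝ | (∀ v, 0 < x v) ∧ ∑ v, x v < 1}
  have hU : IsOpen U := by
    simp only [U, Set.ofPred_and, Set.ofPred_forall]
    exact (isOpen_iInter_of_finite fun v ↦ isOpen_lt continuous_const (continuous_apply v)).inter
      (isOpen_lt (continuous_finsetSum _ fun v _ ↦ continuous_apply v) continuous_const)
  have hUP : U ⊆ stablePolytope G := fun x hx ↦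
    mem_stablePolytope_of_nonneg_of_sum_le_one (fun v ↦ (hx.1 v).le) hx.2.le
  refine interior_maximal hUP hU ⟨fun v ↦ by simpa using hδ, ?_⟩
  simpa [mul_comm] using hδV

theorem one_mem_interior_dilate_stablePolytope {α : Type*} [Fintype α] [Nonempty α]
    (C : G.Coloring α) {k : ℕ} (hk : Fintype.card α < k) :
    (1 : V → ℝ) ∈ interior (dilate k (stablePolytope G)) := by
  have hm : (0 : ℝ) < Fintype.card α := by exact_mod_cast Fintype.card_pos
  have hk0 : (0 : ℝ) < k := hm.trans (by exact_mod_cast hk)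
  set c := (k : ℝ)⁻¹
  set δ := ((k : ℝ) + Fintype.card V + 1)⁻¹
  have hN : (0 : ℝ) ≤ Fintype.card V := Nat.cast_nonneg _
  have hδc : δ < c := inv_strictAnti₀ hk0 (by linarith)
  have hδV : δ * Fintype.card V < 1 := (inv_mul_lt_one₀ (by positivity)).2 (by linarith)
  have hcm : c < (Fintype.card α : ℝ)⁻¹ := inv_strictAnti₀ hm (by exact_mod_cast hk)
  have hcP : c • (1 : V → ℝ) ∈ interior (stablePolytope G) :=
    convex_stablePolytope.smul_mem_interior_of_lt
      (smul_one_mem_interior_stablePolytope (by positivity) hδV)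
      (inv_card_smul_one_mem_stablePolytope C) hδc hcm
  rw [dilate_eq_smul, interior_smul₀ hk0.ne']
  exact ⟨c • 1, hcP, by simp [c, smul_smul, hk0.ne']⟩

theorem codeg_stablePolytope_lineGraph_top_fin {n : ℕ} (hn : 1 < n) (hodd : Odd n) :
    codeg (stablePolytope (⊤ : SimpleGraph (Fin n)).lineGraph) = n + 1 := by
  have : NeZero n := ⟨by omega⟩
  have hmem : n + 1 ∈ {k | 0 < k ∧ ∃ x, IsLatticePt x ∧
      x ∈ interior (dilate k (stablePolytope (⊤ : SimpleGraph (Fin n)).lineGraph))} :=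
    ⟨n.succ_pos, 1, fun _ ↦ ⟨1, by simp⟩,
      one_mem_interior_dilate_stablePolytope (sumColoringLineGraphTop (Fin n)) (by simp)⟩
  refine le_antisymm (Nat.sInf_le hmem) (le_csInf ⟨_, hmem⟩ ?_)
  rintro k ⟨-, x, hx, hxk⟩
  have : Nonempty (⊤ : SimpleGraph (Fin n)).edgeSet :=
    ⟨⟨s(0, ⟨1, hn⟩), by simp [Fin.ext_iff]⟩⟩
  have hkα := card_lt_mul_indepNum_of_isLatticePt_mem_interior_dilate hx hxk
  rw [card_edgeSet_top_fin hodd] at hkα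
  exact Nat.lt_of_mul_lt_mul_right
    (hkα.trans_le (Nat.mul_le_mul_left k indepNum_lineGraph_top_fin_le))

/-- For odd `n ≥ 5` and `G = L(K_n)` the line graph of the complete graph `K_n`:
`ω(G) + 1 = n < codeg(P_G) = χ(G) + 1 = n + 1`. -/
theorem stmt18 (n : ℕ) (hn : 5 ≤ n) (hodd : Odd n) :
    ((⊤ : SimpleGraph (Fin n)).lineGraph.cliqueNum + 1 = n) ∧
    codeg (stablePolytope (⊤ : SimpleGraph (Fin n)).lineGraph) = n + 1 ∧
    (⊤ : SimpleGraph (Fin n)).lineGraph.chromaticNumber = (n : ℕ∞) := by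
  refine ⟨?_, codeg_stablePolytope_lineGraph_top_fin (by omega) hodd,
    chromaticNumber_lineGraph_top_fin (by omega) hodd⟩
  have := cliqueNum_lineGraph_top (V := Fin n) (by simp; omega)
  simp only [Fintype.card_fin] at this
  omega
end
end
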